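/- arXiv:2401.09708 — 3 statements merged into one kernel-verified Lean document; each statement's English description precedes it below -/
import Mathlib

section
/- For N ≥ 2, the map r ↦ C(F_{N,r}) is a bijection from the set {r : 1 ≤ r < N, gcd(r,N) = 1} onto the set {p : 1 ≤ p < N, gcd(p,N) = 1}. In particular, C(F_{N,r}) takes different values for different admissible r, and every integer less than N and coprime to N is attained. -/
/-- A simple circuit on `N` sites: a sequence (indexed by time `Fin N`, 0-indexed)
of residues modulo `N` in which every residue occurs exactly once. -/
def IsSimpleCircuit (N : ℕ) (F : Fin N → ZMod N) : Prop := Function.Bijective F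

/-- Swap move: swap time-adjacent entries at (0-indexed) positions `k`, `k+1`
provided their difference is not ≡ -1, 0, 1 (mod N). -/
def SwapMove (N : ℕ) (F G : Fin N → ZMod N) : Prop :=
  ∃ k : ℕ, ∃ h : k + 1 < N,
    F ⟨k, Nat.lt_of_succ_lt h⟩ - F ⟨k + 1, h⟩ ≠ -1 ∧
    F ⟨k, Nat.lt_of_succ_lt h⟩ - F ⟨k + 1, h⟩ ≠ 0 ∧
    F ⟨k, Nat.lt_of_succ_lt h⟩ - F ⟨k + 1, h⟩ ≠ 1 ∧
    G = F ∘ Equiv.swap ⟨k, Nat.lt_of_succ_lt h⟩ ⟨k + 1, h⟩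

/-- Cyclic-shift move: `(i₁, i₂, …, i_N) ↦ (i₂, …, i_N, i₁)`. -/
def CycMove (N : ℕ) (F G : Fin N → ZMod N) : Prop :=
  G = F ∘ (finRotate N)

/-- Equivalence of circuits: finitely many swap/cyclic moves. -/
def CircuitEquiv (N : ℕ) : (Fin N → ZMod N) → (Fin N → ZMod N) → Prop :=
  Relation.EqvGen (fun F G => SwapMove N F G ∨ CycMove N F G)

/-- The set `Q_N` of admissible pairs `(q, r)`. -/
def QN (N : ℕ) : Set (ℕ × ℕ) :=
  {qr | 2 ≤ qr.1 ∧ qr.1 ≤ N ∧ qr.1 ∣ N ∧ 1 ≤ qr.2 ∧ qr.2 < qr.1 ∧ Nat.gcd qr.1 qr.2 = 1}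

/-- The canonical circuit `F_{q,r}`: the entry at 0-indexed time `l = j·(N/q) + i`
is the residue `1 + j·r + i·q (mod N)`. -/
def canonicalCircuit (N q r : ℕ) : Fin N → ZMod N :=
  fun l => ((1 + (l.val / (N / q)) * r + (l.val % (N / q)) * q : ℕ) : ZMod N)

/-- The double staircase circuit `F_p = (1, 2, …, N−p, N, N−1, …, N−p+1)`. -/
def doubleStaircase (N p : ℕ) : Fin N → ZMod N :=
  fun l => if l.val < N - p then ((l.val + 1 : ℕ) : ZMod N)
           else ((2 * N - p - l.val : ℕ) : ZMod N)

/-- The generalized staircase circuit `F_{N,r}`, whose entry at 1-indexed time `l`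
is `1 + (l−1)·r (mod N)`. -/
def staircase (N r : ℕ) : Fin N → ZMod N :=
  fun l => ((1 + l.val * r : ℕ) : ZMod N)

/-- The invariant `C(F)`: the number of (0-indexed) time indices `l` such that some
earlier entry equals `F l + 1 (mod N)`. -/
def Cinv (N : ℕ) (F : Fin N → ZMod N) : ℕ :=
  (Finset.univ.filter (fun l : Fin N => ∃ k : Fin N, k < l ∧ F k = F l + 1)).card

/-!
In `F_{N,r}` the entry at time `k` exceeds the entry at time `l` by one exactly when
`k ≡ l + r⁻¹ (mod N)`. For `k < l` this forces `k = l + r⁻¹ - N`, which exists iff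
`l ≥ N - r⁻¹`; so `C(F_{N,r})` is the representative of `r⁻¹` in `[0, N)`, and inversion is an
involution of the residues coprime to `N`.
-/

open Finset

namespace ZMod

variable {N r : ℕ}

lemma coprime_val_inv_natCast (hr : r.Coprime N) : ((r : ZMod N)⁻¹).val.Coprime N :=
  (isUnit_iff_coprime _ N).1 (.of_mul_eq_one _ (val_inv_mul hr))

lemma val_inv_natCast_pos (hr : r.Coprime N) (hN : N ≠ 1) : 0 < ((r : ZMod N)⁻¹).val :=
  Nat.pos_of_ne_zero fun h => hN <| by
    simpa [h, Nat.coprime_zero_left] using coprime_val_inv_natCast hr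

lemma val_inv_natCast_val_inv_natCast (hr : r.Coprime N) (hrN : r < N) :
    (((((r : ZMod N)⁻¹).val : ℕ) : ZMod N)⁻¹).val = r := by
  rw [ZMod.inv_eq_of_mul_eq_one N _ _ (val_inv_mul hr), val_natCast, Nat.mod_eq_of_lt hrN]

end ZMod

namespace Fin

variable {N s : ℕ}

lemma exists_lt_natCast_eq_natCast_add_iff (hs : s < N) (l : Fin N) :
    (∃ k : Fin N, k < l ∧ (k.val : ZMod N) = l.val + s) ↔ N ≤ l.val + s := by
  have hl := l.isLt
  simp_rw [← Nat.cast_add, ZMod.natCast_eq_natCast_iff', Nat.mod_eq_of_lt (Fin.isLt _)]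
  constructor
  · rintro ⟨k, hkl, hk⟩
    by_contra! h
    rw [Nat.mod_eq_of_lt h] at hk
    exact absurd hkl (by rw [Fin.lt_def]; omega)
  · intro h
    have hmod : (l.val + s) % N = l.val + s - N := by
      rw [Nat.mod_eq_sub_mod h, Nat.mod_eq_of_lt (by omega)]
    exact ⟨⟨l.val + s - N, by omega⟩, show l.val + s - N < l.val by omega, hmod.symm⟩

lemma card_filter_le_val_add (hs : s ≤ N) : #{l : Fin N | N ≤ l.val + s} = s := by
  have hsplit := card_filter_add_card_filter_not (s := univ) fun l : Fin N => l.val < N - s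
  rw [card_filter_val_lt, card_univ, Fintype.card_fin] at hsplit
  rw [filter_congr fun l _ => show N ≤ l.val + s ↔ ¬ l.val < N - s by omega]
  omega

end Fin

lemma staircase_eq_add_one_iff {N r : ℕ} (hr : r.Coprime N) (k l : Fin N) :
    staircase N r k = staircase N r l + 1 ↔
      (k.val : ZMod N) = l.val + ((r : ZMod N)⁻¹).val := by
  have hrs := ZMod.mul_val_inv hr
  simp only [staircase, Nat.cast_add, Nat.cast_mul, Nat.cast_one]
  constructor
  · intro h
    linear_combination (((r : ZMod N)⁻¹).val : ZMod N) * h - (k.val - l.val : ZMod N) * hrs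
  · intro h
    linear_combination (r : ZMod N) * h + hrs

theorem Cinv_staircase {N r : ℕ} [NeZero N] (hr : r.Coprime N) :
    Cinv N (staircase N r) = ((r : ZMod N)⁻¹).val := by
  rw [Cinv, ← Fin.card_filter_le_val_add (ZMod.val_lt _).le]
  congr 1
  refine filter_congr fun l _ => ?_
  simp_rw [staircase_eq_add_one_iff hr]
  exact Fin.exists_lt_natCast_eq_natCast_add_iff (ZMod.val_lt _) l

theorem Cinv_staircase_bijOn_general (N : ℕ) :
    Set.BijOn (fun r => Cinv N (staircase N r))
      {r : ℕ | 1 ≤ r ∧ r < N ∧ Nat.gcd r N = 1}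
      {p : ℕ | 1 ≤ p ∧ p < N ∧ Nat.gcd p N = 1} := by
  set S := {r : ℕ | 1 ≤ r ∧ r < N ∧ Nat.gcd r N = 1}
  set inverse : ℕ → ℕ := fun r => ((r : ZMod N)⁻¹).val
  have maps : Set.MapsTo inverse S S := fun r ⟨hr1, hrN, hr⟩ =>
    have : NeZero N := ⟨by omega⟩
    ⟨ZMod.val_inv_natCast_pos hr (by omega), ZMod.val_lt _, ZMod.coprime_val_inv_natCast hr⟩
  have involutive : Set.InvOn inverse inverse S S :=
    ⟨fun r ⟨_, hrN, hr⟩ => ZMod.val_inv_natCast_val_inv_natCast hr hrN,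
      fun r ⟨_, hrN, hr⟩ => ZMod.val_inv_natCast_val_inv_natCast hr hrN⟩
  refine (involutive.bijOn maps maps).congr fun r ⟨_, hrN, hr⟩ => ?_
  have : NeZero N := ⟨by omega⟩
  exact (Cinv_staircase hr).symm

/-- The map `r ↦ C(F_{N,r})` is a bijection from
`{r : 1 ≤ r < N, gcd(r,N) = 1}` onto `{p : 1 ≤ p < N, gcd(p,N) = 1}`. -/
theorem Cinv_staircase_bijOn (N : ℕ) (hN : 2 ≤ N) :
    Set.BijOn (fun r => Cinv N (staircase N r))
      {r : ℕ | 1 ≤ r ∧ r < N ∧ Nat.gcd r N = 1}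
      {p : ℕ | 1 ≤ p ∧ p < N ∧ Nat.gcd p N = 1} :=
  Cinv_staircase_bijOn_general N
end

section
/- For every integer N ≥ 2, the map (q,r) ↦ C(F_{q,r}) is injective on Q_N: if (q,r), (q',r') ∈ Q_N and C(F_{q,r}) = C(F_{q',r'}), then q = q' and r = r'. -/
/-! Write a time as `l = j·m + i` with `m = N/q`, `j < q`, `i < m`. Modulo `q` the entry
`1 + j·r + i·q` only remembers `1 + j·r`, so `F_{q,r}` is a bijection and the value
`F_{q,r}(l) + 1` occurs in block `j + s (mod q)`, where `s = r⁻¹ mod q`. It occurs before time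
`l` exactly when `j + s ≥ q`, whence `C(F_{q,r}) = s·m`. As `s` is prime to `q`,
`gcd(C(F_{q,r}), N) = m` recovers `q`, then `s`, and `r` is the inverse of `s` modulo `q`. -/

section CanonicalCircuit

variable {q m r : ℕ}

lemma canonicalCircuit_apply (l : Fin (q * m)) :
    canonicalCircuit (q * m) q r l =
      1 + ((l / m : ℕ) : ZMod (q * m)) * r + ((l % m : ℕ) : ZMod (q * m)) * q := by
  have hq : 0 < q := Nat.pos_of_mul_pos_right l.pos
  simp [canonicalCircuit, Nat.mul_div_cancel_left m hq]

lemma div_lt_of_fin_mul (l : Fin (q * m)) : l / m < q :=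
  Nat.div_lt_of_lt_mul (l.isLt.trans_eq (mul_comm q m))

lemma div_mul_eq_of_canonicalCircuit_eq_add {k l : Fin (q * m)} {d : ℕ}
    (h : canonicalCircuit (q * m) q r k = canonicalCircuit (q * m) q r l + d) :
    ((k / m : ℕ) : ZMod q) * r = (l / m : ℕ) * r + d := by
  have h' := congrArg (ZMod.castHom (dvd_mul_right q m) (ZMod q)) h
  simp only [canonicalCircuit_apply, map_add, map_mul, map_natCast, map_one,
    ZMod.natCast_self, mul_zero, add_zero] at h'
  linear_combination h'

theorem canonicalCircuit_injective (hr : IsUnit (r : ZMod q)) :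
    Function.Injective (canonicalCircuit (q * m) q r) := by
  intro k l h
  have hdiv : k / m = l / m := by
    have h0 := div_mul_eq_of_canonicalCircuit_eq_add (d := 0) (by simpa using h)
    rw [Nat.cast_zero, add_zero] at h0
    have h1 := (ZMod.natCast_eq_natCast_iff' _ _ q).mp (hr.mul_right_cancel h0)
    rwa [Nat.mod_eq_of_lt (div_lt_of_fin_mul k), Nat.mod_eq_of_lt (div_lt_of_fin_mul l)] at h1
  have hmod : k % m = l % m := by
    rw [canonicalCircuit_apply, canonicalCircuit_apply, hdiv, add_right_inj] at h
    have h1 : k % m * q ≡ l % m * q [MOD m * q] := by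
      rw [mul_comm m q, ← ZMod.natCast_eq_natCast_iff]
      exact_mod_cast h
    simpa [Nat.ModEq] using h1.mul_right_cancel' (Nat.pos_of_mul_pos_right k.pos).ne'
  ext
  rw [← Nat.div_add_mod k m, ← Nat.div_add_mod l m, hdiv, hmod]

theorem isSimpleCircuit_canonicalCircuit [NeZero (q * m)] (hr : IsUnit (r : ZMod q)) :
    IsSimpleCircuit (q * m) (canonicalCircuit (q * m) q r) :=
  (Fintype.bijective_iff_injective_and_card _).mpr ⟨canonicalCircuit_injective hr, by simp⟩

variable {s : ℕ}

theorem exists_lt_canonicalCircuit_eq_add_one_iff [NeZero (q * m)] (hs0 : 0 < s) (hsq : s < q)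
    (hrs : (r : ZMod q) * s = 1) (l : Fin (q * m)) :
    (∃ k < l, canonicalCircuit (q * m) q r k = canonicalCircuit (q * m) q r l + 1) ↔
      q ≤ l / m + s := by
  have hF := isSimpleCircuit_canonicalCircuit (m := m) (.of_mul_eq_one _ hrs)
  obtain ⟨k, hk⟩ := hF.2 (canonicalCircuit (q * m) q r l + 1)
  have hblock : k / m % q = (l / m + s) % q := by
    have h := div_mul_eq_of_canonicalCircuit_eq_add (d := 1) (by exact_mod_cast hk)
    rw [← ZMod.natCast_eq_natCast_iff']
    push_cast
    linear_combination (s : ZMod q) * h + (((l / m : ℕ) : ZMod q) - (k / m : ℕ)) * hrs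
  have hjk := div_lt_of_fin_mul k
  have hjl := div_lt_of_fin_mul l
  rw [Nat.mod_eq_of_lt hjk] at hblock
  have hunique : (∃ k' < l, canonicalCircuit (q * m) q r k' =
      canonicalCircuit (q * m) q r l + 1) ↔ k < l :=
    ⟨fun ⟨k', hk'l, hk'⟩ => hF.1 (hk.trans hk'.symm) ▸ hk'l, fun hkl => ⟨k, hkl, hk⟩⟩
  rw [hunique]
  by_cases hle : q ≤ l / m + s
  · rw [Nat.mod_eq_sub_mod hle, Nat.mod_eq_of_lt (by omega)] at hblock
    exact iff_of_true (Fin.lt_def.mpr (Nat.lt_of_div_lt_div (c := m) (by omega))) hle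
  · rw [Nat.mod_eq_of_lt (by omega)] at hblock
    refine iff_of_false (fun hkl => ?_) hle
    have := Nat.div_le_div_right (c := m) (Fin.lt_def.mp hkl).le
    omega

theorem Cinv_canonicalCircuit [NeZero (q * m)] (hs0 : 0 < s) (hsq : s < q)
    (hrs : (r : ZMod q) * s = 1) :
    Cinv (q * m) (canonicalCircuit (q * m) q r) = s * m := by
  have hm : 0 < m := Nat.pos_of_mul_pos_left (Nat.pos_of_neZero (q * m))
  let c : Fin (q * m) := ⟨(q - s) * m, Nat.mul_lt_mul_of_pos_right (by omega) hm⟩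
  have hc : ∀ l : Fin (q * m),
      (∃ k < l, canonicalCircuit (q * m) q r k = canonicalCircuit (q * m) q r l + 1) ↔ c ≤ l := by
    intro l
    rw [exists_lt_canonicalCircuit_eq_add_one_iff hs0 hsq hrs, Fin.le_def,
      ← Nat.le_div_iff_mul_le hm]
    omega
  rw [Cinv, Finset.filter_congr (fun l _ => hc l), Finset.filter_le_eq_Ici, Fin.card_Ici,
    ← Nat.sub_mul]
  congr 1
  omega

end CanonicalCircuit

theorem mem_QN {N q r : ℕ} :
    (q, r) ∈ QN N ↔ 2 ≤ q ∧ q ≤ N ∧ q ∣ N ∧ 1 ≤ r ∧ r < q ∧ q.gcd r = 1 :=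
  Iff.rfl

theorem exists_Cinv_canonicalCircuit_eq_mul {N q r : ℕ} (h : (q, r) ∈ QN N) :
    ∃ s : ℕ, s.Coprime q ∧ (r : ZMod q) * s = 1 ∧
      Cinv N (canonicalCircuit N q r) = s * (N / q) := by
  obtain ⟨hq2, hqN, ⟨m, rfl⟩, -, -, hgcd⟩ := mem_QN.mp h
  have : Fact (1 < q) := ⟨hq2⟩
  have : NeZero (q * m) := ⟨by omega⟩
  set s := ((r : ZMod q)⁻¹).val
  have hrs : (r : ZMod q) * s = 1 := by
    rw [ZMod.natCast_zmod_val]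
    exact ZMod.coe_mul_inv_eq_one r (Nat.coprime_comm.mp hgcd)
  have hs0 : 0 < s := Nat.pos_of_ne_zero fun h0 => by simp [h0] at hrs
  refine ⟨s, (ZMod.isUnit_iff_coprime s q).mp (.of_mul_eq_one_right _ hrs), hrs, ?_⟩
  rw [Nat.mul_div_cancel_left m (by omega)]
  exact Cinv_canonicalCircuit hs0 (ZMod.val_lt _) hrs

theorem gcd_Cinv_canonicalCircuit {N q r : ℕ} (h : (q, r) ∈ QN N) :
    (Cinv N (canonicalCircuit N q r)).gcd N = N / q := by
  obtain ⟨s, hs, -, hC⟩ := exists_Cinv_canonicalCircuit_eq_mul h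
  rw [hC]
  nth_rw 2 [← Nat.mul_div_cancel' (mem_QN.mp h).2.2.1]
  rw [Nat.gcd_mul_right, hs, one_mul]

theorem Cinv_canonical_injOn_general (N : ℕ) :
    ∀ qr ∈ QN N, ∀ qr' ∈ QN N,
      Cinv N (canonicalCircuit N qr.1 qr.2) = Cinv N (canonicalCircuit N qr'.1 qr'.2) →
      qr = qr' := by
  rintro ⟨q, r⟩ hqr ⟨q', r'⟩ hqr' hC
  obtain ⟨hq2, hqN, hqdvd, -, hrq, -⟩ := mem_QN.mp hqr
  obtain ⟨-, -, hqdvd', -, hrq', -⟩ := mem_QN.mp hqr'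
  have hN : N ≠ 0 := by omega
  have hq : q = q' := by
    rw [← Nat.div_div_self hqdvd hN, ← gcd_Cinv_canonicalCircuit hqr, hC,
      gcd_Cinv_canonicalCircuit hqr', Nat.div_div_self hqdvd' hN]
  subst hq
  obtain ⟨s, -, hrs, hCs⟩ := exists_Cinv_canonicalCircuit_eq_mul hqr
  obtain ⟨s', -, hrs', hCs'⟩ := exists_Cinv_canonicalCircuit_eq_mul hqr'
  have hs : s = s' :=
    Nat.eq_of_mul_eq_mul_right (Nat.div_pos hqN (by omega))
      (hCs.symm.trans (hC.trans hCs'))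
  subst hs
  have hr : (r : ZMod q) = r' := left_inv_eq_right_inv hrs (by rw [mul_comm]; exact hrs')
  rw [ZMod.natCast_eq_natCast_iff', Nat.mod_eq_of_lt hrq, Nat.mod_eq_of_lt hrq'] at hr
  rw [hr]

/-- The map `(q,r) ↦ C(F_{q,r})` is injective on `Q_N`. -/
theorem Cinv_canonical_injOn (N : ℕ) (hN : 2 ≤ N) :
    ∀ qr ∈ QN N, ∀ qr' ∈ QN N,
      Cinv N (canonicalCircuit N qr.1 qr.2) = Cinv N (canonicalCircuit N qr'.1 qr'.2) →
      qr = qr' :=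
  Cinv_canonical_injOn_general N
end

section
/- Let G be a group, N ≥ 2 an integer, and s, v ∈ G with s^N = 1, satisfying far-commutation. Let q be a divisor of N with q ≥ 2 and r ≥ 1 an integer, and let F := f_{(q−1)r} ⋯ f_r · f_0. Then F has the space-time symmetry: s^{−r} F s^r = f_0 · f_{(q−1)r} ⋯ f_{2r} · f_r; that is, conjugating the Floquet operator by a translation of r sites yields the same circuit advanced in time by one layer. -/
/-!
Conjugating by `s ^ r` shifts every gate, hence every layer, by `r` sites, so it turns
`F = f_{(q-1)r} ⋯ f_0` into `f_{qr} ⋯ f_r`. The layer `f_m` is `q`-periodic in `m`: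
its gates sit at the sites `m + kq`, which pairwise differ by multiples of the divisor `q ≥ 2`
of `N` and therefore commute, so moving the gate `v_{m+N} = v_m` of `f_{m+q}` from the left end
to the right end yields `f_m`. Hence the leading layer `f_{qr}` is `f_0`.
-/

/-- The translated gate `v_i := s^{-i} v s^i`. -/
def vgate {G : Type*} [Group G] (s v : G) (i : ℤ) : G := s ^ (-i) * v * s ^ i

/-- The layer `f_m := v_{m+(N/q−1)q} ⋯ v_{m+q} · v_m`. -/
def layer {G : Type*} [Group G] (s v : G) (N q : ℕ) (m : ℤ) : G :=
  (((List.range (N / q)).reverse).map (fun k => vgate s v (m + (k : ℤ) * (q : ℤ)))).prod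

/-- Far-commutation: gates commute unless their site difference is ±1 mod N. -/
def FarCommute {G : Type*} [Group G] (s v : G) (N : ℕ) : Prop :=
  ∀ i j : ℤ, ¬ (i - j ≡ 1 [ZMOD (N : ℤ)]) → ¬ (i - j ≡ -1 [ZMOD (N : ℤ)]) →
    vgate s v i * vgate s v j = vgate s v j * vgate s v i

/-- The Floquet operator `F = f_{(q−1)r} ⋯ f_r · f_0`. -/
def floquet {G : Type*} [Group G] (s v : G) (N q r : ℕ) : G :=
  (((List.range q).reverse).map (fun j => layer s v N q ((j : ℤ) * (r : ℤ)))).prod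

/-- The binders of `layer` and `floquet` are integers, so `List.range _` is coerced to `List ℤ`
through the list monad; this undoes the coercion. -/
lemma List.map_bind_pure_natCast {α : Type*} (f : ℤ → α) (l : List ℕ) :
    List.map f (do let a ← l; pure (a : ℤ)) = l.map fun n : ℕ => f n := by
  simp only [List.bind_eq_flatMap, List.pure_def, ← List.map_eq_flatMap, List.map_map]
  rfl

section ReverseRange

variable {M : Type*} [Monoid M] (f : ℕ → M) (n : ℕ)

lemma List.prod_map_reverse_range_succ :
    ((List.range (n + 1)).reverse.map f).prod = f n * ((List.range n).reverse.map f).prod := by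
  simp [List.range_succ]

lemma List.prod_map_reverse_range_succ' :
    ((List.range (n + 1)).reverse.map f).prod =
      ((List.range n).reverse.map fun i => f (i + 1)).prod * f 0 := by
  simp [List.range_succ_eq_map, List.map_reverse, Function.comp_def]

lemma List.prod_map_reverse_range_succ_shift (hper : f (n + 1) = f 0)
    (hcomm : ∀ k, Commute (f 0) (f (k + 1))) :
    ((List.range (n + 1)).reverse.map fun k => f (k + 1)).prod =
      ((List.range (n + 1)).reverse.map f).prod := by
  rw [List.prod_map_reverse_range_succ (fun k => f (k + 1)), List.prod_map_reverse_range_succ' f,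
    hper]
  refine (Commute.list_prod_right _ _ fun x hx => ?_).eq
  obtain ⟨k, -, rfl⟩ := List.mem_map.1 hx
  exact hcomm k

end ReverseRange

lemma inv_mul_list_prod_mul {G : Type*} [Group G] (g : G) (l : List G) :
    g⁻¹ * l.prod * g = (l.map fun x => g⁻¹ * x * g).prod := by
  induction l with
  | nil => simp
  | cons a l ih =>
    simp only [List.prod_cons, List.map_cons, ← ih]
    group

section Circuit

variable {G : Type*} [Group G] (s v : G)

lemma layer_eq_prod (N q : ℕ) (m : ℤ) :
    layer s v N q m =
      ((List.range (N / q)).reverse.map fun k : ℕ => vgate s v (m + k * q)).prod := by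
  rw [layer, List.map_bind_pure_natCast]

lemma floquet_eq_prod (N q r : ℕ) :
    floquet s v N q r = ((List.range q).reverse.map fun j : ℕ => layer s v N q (j * r)).prod := by
  rw [floquet, List.map_bind_pure_natCast]

lemma vgate_add_of_pow_eq_one {N : ℕ} (hs : s ^ N = 1) (i : ℤ) :
    vgate s v (i + N) = vgate s v i := by
  simp [vgate, zpow_add, hs]

lemma inv_zpow_mul_vgate_mul_zpow (k i : ℤ) :
    (s ^ k)⁻¹ * vgate s v i * s ^ k = vgate s v (i + k) := by
  simp [vgate, zpow_add, zpow_neg, mul_assoc]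

lemma inv_zpow_mul_layer_mul_zpow (N q : ℕ) (k m : ℤ) :
    (s ^ k)⁻¹ * layer s v N q m * s ^ k = layer s v N q (m + k) := by
  rw [layer_eq_prod, layer_eq_prod, inv_mul_list_prod_mul, List.map_map]
  refine congrArg List.prod (List.map_congr_left fun i _ => ?_)
  simp only [Function.comp_apply, inv_zpow_mul_vgate_mul_zpow, add_right_comm]

variable {s v}

lemma FarCommute.commute_of_dvd_sub {N q : ℕ} (h : FarCommute s v N) (hq : q ∣ N) (hq1 : q ≠ 1)
    {i j : ℤ} (hij : (q : ℤ) ∣ i - j) : Commute (vgate s v i) (vgate s v j) := by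
  have hdvd : ∀ e : ℤ, i - j ≡ e [ZMOD N] → (q : ℤ) ∣ e := fun e he => by
    simpa using ((Int.natCast_dvd_natCast.2 hq).trans he.dvd).add hij
  have hndvd : ¬ (q : ℤ) ∣ 1 := fun h1 => hq1 (Nat.dvd_one.1 (Int.natCast_dvd_natCast.1 h1))
  exact h i j (fun he => hndvd (hdvd 1 he)) fun he => hndvd (Int.dvd_neg.1 (hdvd (-1) he))

lemma layer_periodic {N q : ℕ} (hs : s ^ N = 1) (hcomm : FarCommute s v N) (hq : q ∣ N)
    (hq1 : q ≠ 1) : Function.Periodic (layer s v N q) q := by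
  intro m
  rw [layer_eq_prod, layer_eq_prod]
  cases hn : N / q with
  | zero => rfl
  | succ n =>
    have hN : ((n : ℤ) + 1) * q = N := by exact_mod_cast hn ▸ Nat.div_mul_cancel hq
    calc ((List.range (n + 1)).reverse.map fun k : ℕ => vgate s v (m + q + k * q)).prod
        = ((List.range (n + 1)).reverse.map
            fun k : ℕ => vgate s v (m + ((k + 1 : ℕ) : ℤ) * q)).prod := by
          push_cast
          ring_nf
      _ = _ := by
        refine List.prod_map_reverse_range_succ_shift (fun k : ℕ => vgate s v (m + k * q)) n ?_
          fun k => hcomm.commute_of_dvd_sub hq hq1 ⟨-((k : ℤ) + 1), by push_cast; ring⟩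
        simpa [hN] using vgate_add_of_pow_eq_one s v hs m

end Circuit

theorem floquet_spacetime_symmetry_general {G : Type*} [Group G] (N : ℕ)
    (s v : G) (hs : s ^ N = 1) (hcomm : FarCommute s v N)
    (q : ℕ) (hq : q ∣ N) (hq2 : 2 ≤ q) (r : ℕ) :
    (s ^ r)⁻¹ * floquet s v N q r * s ^ r =
      layer s v N q 0 *
        (((List.range (q - 1)).reverse).map
          (fun j => layer s v N q (((j : ℤ) + 1) * (r : ℤ)))).prod := by
  obtain ⟨p, rfl⟩ : ∃ p, q = p + 1 := ⟨q - 1, by omega⟩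
  rw [floquet_eq_prod, ← zpow_natCast, inv_mul_list_prod_mul, List.map_map,
    List.prod_map_reverse_range_succ, Nat.add_sub_cancel, List.map_bind_pure_natCast]
  congr 1
  · rw [Function.comp_apply, inv_zpow_mul_layer_mul_zpow,
      ← ((layer_periodic hs hcomm hq (by omega)).nat_mul r).eq]
    congr 1
    push_cast
    ring
  · refine congrArg List.prod (List.map_congr_left fun j _ => ?_)
    rw [Function.comp_apply, inv_zpow_mul_layer_mul_zpow]
    congr 1
    ring

/-- Space-time symmetry: conjugating the Floquet operator
`F = f_{(q−1)r} ⋯ f_r · f_0` by a translation of `r` sites yields the same circuit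
advanced in time by one layer: `s^{−r} F s^r = f_0 · f_{(q−1)r} ⋯ f_{2r} · f_r`. -/
theorem floquet_spacetime_symmetry {G : Type*} [Group G] (N : ℕ) (hN : 2 ≤ N)
    (s v : G) (hs : s ^ N = 1) (hcomm : FarCommute s v N)
    (q : ℕ) (hq : q ∣ N) (hq2 : 2 ≤ q) (r : ℕ) (hr : 1 ≤ r) :
    (s ^ r)⁻¹ * floquet s v N q r * s ^ r =
      layer s v N q 0 *
        (((List.range (q - 1)).reverse).map
          (fun j => layer s v N q (((j : ℤ) + 1) * (r : ℤ)))).prod :=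
  floquet_spacetime_symmetry_general N s v hs hcomm q hq hq2 r
end
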